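/- arXiv:2310.07157 — 2 statements merged into one kernel-verified Lean document; each statement's English description precedes it below -/
import Mathlib

section
/- For a single-device member with strictly concave differentiable utility U (inverse marginal utility f strictly decreasing and continuous), consumption bounds [d_low, d_high], operating envelopes z_low ≤ 0 ≤ z_high, and community price Γ, define the thresholds θ₁ = d^Γ − z_high and θ₂ = d^Γ − z_low, where d^Γ = max(d_low, min(f(Γ), d_high)). Then θ₁ ≤ θ₂, and the optimal consumption d*(b) of the surplus maximization equals: b + z_high if b < θ₁ (import envelope binds), d^Γ if θ₁ ≤ b ≤ θ₂, and b + z_low if b > θ₂ (export envelope binds), provided in the first and third cases the resulting value lies within [d_low, d_high] (guaranteed by the feasibility assumption z_high ≥ d_low − b, z_low ≤ d_high − b). -/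
open Set

lemma my_tangent_le (U : ℝ → ℝ) (hU : ConcaveOn ℝ Set.univ U)
    (hU_diff : Differentiable ℝ U) (c d : ℝ) :
    U d ≤ U c + deriv U c * (d - c) := by
  rcases lt_trichotomy d c with h | h | h
  · have h1 := hU.deriv_le_slope (mem_univ d) (mem_univ c) h (hU_diff c)
    rw [slope_def_field] at h1
    have hc : 0 < c - d := by linarith
    rw [le_div_iff₀ hc] at h1
    nlinarith
  · simp [h]
  · have h1 := hU.slope_le_deriv (mem_univ c) (mem_univ d) h (hU_diff c)
    rw [slope_def_field] at h1
    have hc : 0 < d - c := by linarith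
    rw [div_le_iff₀ hc] at h1
    linarith

/-- Uniqueness of the maximizer of a strictly concave objective over a convex feasible set. -/
lemma my_uniq (U : ℝ → ℝ) (hU_conc : StrictConcaveOn ℝ Set.univ U)
    (d_low d_high z_low z_high Γ b : ℝ) (c dstar : ℝ)
    (hcf : d_low ≤ c ∧ c ≤ d_high ∧ z_low ≤ c - b ∧ c - b ≤ z_high)
    (hmem : d_low ≤ dstar ∧ dstar ≤ d_high ∧ z_low ≤ dstar - b ∧ dstar - b ≤ z_high)
    (hopt : ∀ d, d_low ≤ d → d ≤ d_high → z_low ≤ d - b → d - b ≤ z_high →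
      U d - Γ * (d - b) ≤ U dstar - Γ * (dstar - b))
    (hmax : ∀ d, d_low ≤ d → d ≤ d_high → z_low ≤ d - b → d - b ≤ z_high →
      U d - Γ * (d - b) ≤ U c - Γ * (c - b)) :
    dstar = c := by
  by_contra hne
  obtain ⟨h1, h2, h3, h4⟩ := hmem
  obtain ⟨g1, g2, g3, g4⟩ := hcf
  set m := (dstar + c) / 2 with hm
  have hmf1 : d_low ≤ m := by rw [hm]; linarith
  have hmf2 : m ≤ d_high := by rw [hm]; linarith
  have hmf3 : z_low ≤ m - b := by rw [hm]; linarith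
  have hmf4 : m - b ≤ z_high := by rw [hm]; linarith
  have hcomb := hU_conc.2 (mem_univ dstar) (mem_univ c) hne
    (by norm_num : (0:ℝ) < 1/2) (by norm_num : (0:ℝ) < 1/2) (by norm_num)
  simp only [smul_eq_mul] at hcomb
  have hmid : (1:ℝ)/2 * dstar + 1/2 * c = m := by rw [hm]; ring
  rw [hmid] at hcomb
  have ha := hopt c g1 g2 g3 g4
  have hb := hmax dstar h1 h2 h3 h4
  have hc := hopt m hmf1 hmf2 hmf3 hmf4
  have hlin : Γ * (m - b) = (Γ * (dstar - b) + Γ * (c - b)) / 2 := by rw [hm]; ring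
  linarith

theorem member_two_threshold_policy
    (U f : ℝ → ℝ)
    (hU_conc : StrictConcaveOn ℝ Set.univ U) (hU_diff : Differentiable ℝ U)
    (hf_anti : StrictAnti f) (hf_cont : Continuous f)
    (hinv : ∀ y, deriv U (f y) = y)
    (d_low d_high z_low z_high Γ : ℝ)
    (hd : d_low ≤ d_high) (hzl : z_low ≤ 0) (hzh : 0 ≤ z_high)
    (dΓ θ₁ θ₂ : ℝ)
    (hdΓ : dΓ = max d_low (min (f Γ) d_high))
    (hθ₁ : θ₁ = dΓ - z_high) (hθ₂ : θ₂ = dΓ - z_low)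
    (b : ℝ) (hfeas1 : z_high ≥ d_low - b) (hfeas2 : z_low ≤ d_high - b)
    (dstar : ℝ)
    (hmem : d_low ≤ dstar ∧ dstar ≤ d_high ∧ z_low ≤ dstar - b ∧ dstar - b ≤ z_high)
    (hopt : ∀ d, d_low ≤ d → d ≤ d_high → z_low ≤ d - b → d - b ≤ z_high →
      U d - Γ * (d - b) ≤ U dstar - Γ * (dstar - b)) :
    θ₁ ≤ θ₂ ∧
    (b < θ₁ → dstar = b + z_high) ∧
    (θ₁ ≤ b → b ≤ θ₂ → dstar = dΓ) ∧
    (θ₂ < b → dstar = b + z_low) := by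
  have hconc := hU_conc.concaveOn
  have hanti : StrictAntiOn (deriv U) Set.univ :=
    hU_conc.strictAntiOn_deriv (fun x _ => (hU_diff x))
  have hdΓfΓ : deriv U (f Γ) = Γ := hinv Γ
  have hdΓlo : d_low ≤ dΓ := hdΓ ▸ le_max_left _ _
  have hdΓhi : dΓ ≤ d_high := hdΓ ▸ max_le hd (min_le_right _ _)
  refine ⟨by rw [hθ₁, hθ₂]; linarith, ?_, ?_, ?_⟩
  · -- b < θ₁ : import envelope binds, dstar = b + z_high
    intro hb
    set c := b + z_high with hc
    have hgt : c < dΓ := by rw [hθ₁] at hb; linarith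
    have hdl : d_low ≤ c := by linarith
    have hfle : dΓ ≤ f Γ := by
      have h1 : d_low < dΓ := lt_of_le_of_lt hdl hgt
      have h2 : dΓ = min (f Γ) d_high := by
        rcases max_cases d_low (min (f Γ) d_high) with ⟨h, _⟩ | ⟨h, _⟩
        · rw [hdΓ, h] at h1; exact absurd h1 (lt_irrefl _)
        · rw [hdΓ, h]
      exact h2 ▸ min_le_left _ _
    have hclt : c < f Γ := lt_of_lt_of_le hgt hfle
    have hder : Γ < deriv U c := by
      have := hanti (Set.mem_univ c) (Set.mem_univ (f Γ)) hclt
      rwa [hdΓfΓ] at this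
    refine my_uniq U hU_conc d_low d_high z_low z_high Γ b c dstar
      ⟨hdl, by linarith, by simp [hc]; linarith, by simp [hc]⟩ hmem hopt ?_
    intro d h1 h2 h3 h4
    have ht := my_tangent_le U hconc hU_diff c d
    have hdc : d ≤ c := by linarith
    nlinarith [mul_nonneg (le_of_lt (sub_pos.mpr hder)) (sub_nonneg.mpr hdc)]
  · -- middle case : dstar = dΓ
    intro hb1 hb2
    have h3 : z_low ≤ dΓ - b := by rw [hθ₂] at hb2; linarith
    have h4 : dΓ - b ≤ z_high := by rw [hθ₁] at hb1; linarith
    refine my_uniq U hU_conc d_low d_high z_low z_high Γ b dΓ dstar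
      ⟨hdΓlo, hdΓhi, h3, h4⟩ hmem hopt ?_
    intro d hd1 hd2 _ _
    have ht := my_tangent_le U hconc hU_diff dΓ d
    have hsign : (deriv U dΓ - Γ) * (d - dΓ) ≤ 0 := by
      rcases lt_or_ge (f Γ) d_low with h | h
      · have hdΓ' : dΓ = d_low := by
          rw [hdΓ, min_eq_left (le_trans h.le hd), max_eq_left h.le]
        have : deriv U dΓ < Γ := by
          have := hanti (Set.mem_univ (f Γ)) (Set.mem_univ dΓ) (by rw [hdΓ']; exact h)
          rwa [hdΓfΓ] at this
        nlinarith [sub_nonneg.mpr (hdΓ' ▸ hd1 : dΓ ≤ d)]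
      · rcases lt_or_ge d_high (f Γ) with h' | h'
        · have hdΓ' : dΓ = d_high := by
            rw [hdΓ, min_eq_right h'.le, max_eq_right hd]
          have : Γ < deriv U dΓ := by
            have := hanti (Set.mem_univ dΓ) (Set.mem_univ (f Γ)) (by rw [hdΓ']; exact h')
            rwa [hdΓfΓ] at this
          nlinarith [sub_nonpos.mpr (hdΓ' ▸ hd2 : d ≤ dΓ)]
        · have hdΓ' : dΓ = f Γ := by rw [hdΓ, min_eq_left h', max_eq_right h]
          rw [hdΓ', hdΓfΓ]; ring_nf; simp
    linarith [ht, hsign]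
  · -- θ₂ < b : export envelope binds, dstar = b + z_low
    intro hb
    set c := b + z_low with hc
    have hlt : dΓ < c := by rw [hθ₂] at hb; linarith
    have hdh : c ≤ d_high := by linarith
    have hfle : f Γ ≤ dΓ := by
      rcases le_or_gt (f Γ) d_high with h | h
      · calc f Γ = min (f Γ) d_high := (min_eq_left h).symm
          _ ≤ dΓ := hdΓ ▸ le_max_right _ _
      · have : dΓ = d_high := by rw [hdΓ, min_eq_right h.le, max_eq_right hd]
        linarith
    have hclt : f Γ < c := lt_of_le_of_lt hfle hlt
    have hder : deriv U c < Γ := by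
      have := hanti (Set.mem_univ (f Γ)) (Set.mem_univ c) hclt
      rwa [hdΓfΓ] at this
    refine my_uniq U hU_conc d_low d_high z_low z_high Γ b c dstar
      ⟨by linarith, hdh, by simp [hc], by simp [hc]; linarith⟩ hmem hopt ?_
    intro d h1 h2 h3 h4
    have ht := my_tangent_le U hconc hU_diff c d
    have hdc : c ≤ d := by linarith
    nlinarith [mul_nonneg (le_of_lt (sub_pos.mpr hder)) (sub_nonneg.mpr hdc)]
end

section
/- For the single-device benchmark prosumer with thresholds Δ₁ ≤ Δ₂ ≤ Δ₃ ≤ Δ₄ as above, the optimal consumption under the NEM tariff is: b + z_high if b ≤ Δ₁; d^{π⁺} = max(d_low, min(f(π⁺), d_high)) if Δ₁ ≤ b ≤ Δ₂; b itself (net-zero consumption, clipped to [d_low, d_high]) if Δ₂ ≤ b ≤ Δ₃; d^{π⁻} = max(d_low, min(f(π⁻), d_high)) if Δ₃ ≤ b ≤ Δ₄; and b + z_low if b ≥ Δ₄. -/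
theorem benchmark_optimal_consumption
    (U f : ℝ → ℝ)
    (hU_conc : StrictConcaveOn ℝ Set.univ U) (hU_diff : Differentiable ℝ U)
    (hf_anti : StrictAnti f) (hf_cont : Continuous f)
    (hinv : ∀ y, deriv U (f y) = y)
    (πp πm : ℝ) (h1 : πp ≥ πm) (h2 : πm ≥ 0)
    (P : ℝ → ℝ) (hP : ∀ x, P x = if x ≥ 0 then πp * x else πm * x)
    (d_low d_high z_low z_high : ℝ)
    (hd : d_low ≤ d_high) (hzl : z_low ≤ 0) (hzh : 0 ≤ z_high)
    (Δ₁ Δ₂ Δ₃ Δ₄ : ℝ)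
    (hΔ₂ : Δ₂ = max d_low (min (f πp) d_high))
    (hΔ₃ : Δ₃ = max d_low (min (f πm) d_high))
    (hΔ₁ : Δ₁ = Δ₂ - z_high) (hΔ₄ : Δ₄ = Δ₃ - z_low)
    (b : ℝ) (hfeas1 : z_high ≥ d_low - b) (hfeas2 : z_low ≤ d_high - b)
    (dstar : ℝ)
    (hmem : d_low ≤ dstar ∧ dstar ≤ d_high ∧ z_low ≤ dstar - b ∧ dstar - b ≤ z_high)
    (hopt : ∀ d, d_low ≤ d → d ≤ d_high → z_low ≤ d - b → d - b ≤ z_high →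
      U d - P (d - b) ≤ U dstar - P (dstar - b)) :
    (b ≤ Δ₁ → dstar = b + z_high) ∧
    (Δ₁ ≤ b → b ≤ Δ₂ → dstar = max d_low (min (f πp) d_high)) ∧
    (Δ₂ ≤ b → b ≤ Δ₃ → dstar = max d_low (min b d_high)) ∧
    (Δ₃ ≤ b → b ≤ Δ₄ → dstar = max d_low (min (f πm) d_high)) ∧
    (Δ₄ ≤ b → dstar = b + z_low) := by
  -- deriv U is strictly antitone
  have hU'anti : StrictAnti (deriv U) := by
    intro x y hxy
    have h1' := hU_conc.deriv_lt_slope (Set.mem_univ x) (Set.mem_univ y) hxy (hU_diff y)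
    have h2' := hU_conc.slope_lt_deriv (Set.mem_univ x) (Set.mem_univ y) hxy (hU_diff x)
    linarith
  -- derivative of x ↦ U x - g * x
  have hDer : ∀ (g x : ℝ), HasDerivAt (fun x => U x - g * x) (deriv U x - g) x := by
    intro g x
    exact ((hU_diff x).hasDerivAt).sub (by simpa using (hasDerivAt_id x).const_mul g)
  have hcont : ∀ g : ℝ, Continuous (fun x => U x - g * x) := by
    intro g
    exact hU_diff.continuous.sub (continuous_const.mul continuous_id)
  -- monotone up to f g
  have hmono : ∀ g x y : ℝ, x ≤ y → y ≤ f g → U x - g * x ≤ U y - g * y := by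
    intro g x y hxy hy
    have hm : StrictMonoOn (fun x => U x - g * x) (Set.Iic (f g)) := by
      apply strictMonoOn_of_deriv_pos (convex_Iic (f g)) (hcont g).continuousOn
      intro x hx
      rw [interior_Iic] at hx
      rw [(hDer g x).deriv]
      have := hU'anti hx
      rw [hinv] at this
      linarith
    exact hm.monotoneOn (Set.mem_Iic.2 (hxy.trans hy)) (Set.mem_Iic.2 hy) hxy
  -- antitone from f g on
  have hanti : ∀ g x y : ℝ, f g ≤ x → x ≤ y → U y - g * y ≤ U x - g * x := by
    intro g x y hx hxy
    have hm : StrictAntiOn (fun x => U x - g * x) (Set.Ici (f g)) := by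
      apply strictAntiOn_of_deriv_neg (convex_Ici (f g)) (hcont g).continuousOn
      intro x hx
      rw [interior_Ici] at hx
      rw [(hDer g x).deriv]
      have := hU'anti hx
      rw [hinv] at this
      linarith
    exact (hm.antitoneOn (Set.mem_Ici.2 hx) (Set.mem_Ici.2 (hx.trans hxy))) hxy
  -- clipped monotone/antitone versions
  have hmono' : ∀ g x y : ℝ, x ≤ y → d_low ≤ x → y ≤ max d_low (min (f g) d_high) →
      U x - g * x ≤ U y - g * y := by
    intro g x y hxy hx hy
    rcases le_total (min (f g) d_high) d_low with h | h
    · have hxy' : y ≤ x := by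
        rw [max_eq_left h] at hy; linarith
      have : x = y := le_antisymm hxy hxy'
      rw [this]
    · rw [max_eq_right h] at hy
      exact hmono g x y hxy (hy.trans (min_le_left _ _))
  have hanti' : ∀ g x y : ℝ, x ≤ y → min (f g) d_high ≤ x → y ≤ d_high →
      U y - g * y ≤ U x - g * x := by
    intro g x y hxy hx hy
    rcases le_total d_high (f g) with h | h
    · rw [min_eq_right h] at hx
      have : x = y := le_antisymm hxy (hy.trans hx)
      rw [this]
    · rw [min_eq_left h] at hx
      exact hanti g x y hx hxy
  -- projection optimality
  have hproj : ∀ g d : ℝ, d_low ≤ d → d ≤ d_high →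
      U d - g * d ≤ U (max d_low (min (f g) d_high)) - g * (max d_low (min (f g) d_high)) := by
    intro g d hd1 hd2
    rcases le_total d (max d_low (min (f g) d_high)) with hc | hc
    · exact hmono' g d _ hc hd1 le_rfl
    · exact hanti' g _ d hc (le_max_right _ _) hd2
  -- P facts
  have hPp : ∀ z : ℝ, 0 ≤ z → P z = πp * z := by
    intro z hz; rw [hP]; exact if_pos hz
  have hPm : ∀ z : ℝ, z ≤ 0 → P z = πm * z := by
    intro z hz
    rcases lt_or_eq_of_le hz with h | h
    · rw [hP, if_neg (by linarith)]
    · subst h; rw [hP]; norm_num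
  have hPgep : ∀ z : ℝ, πp * z ≤ P z := by
    intro z; rw [hP]; split_ifs with h
    · exact le_refl _
    · push_neg at h
      exact mul_le_mul_of_nonpos_right h1 h.le
  have hPgem : ∀ z : ℝ, πm * z ≤ P z := by
    intro z; rw [hP]; split_ifs with h
    · exact mul_le_mul_of_nonneg_right h1 h
    · exact le_refl _
  obtain ⟨hm1, hm2, hm3, hm4⟩ := hmem
  -- uniqueness : any feasible optimal point equals dstar
  have huniq : ∀ c : ℝ, d_low ≤ c → c ≤ d_high → z_low ≤ c - b → c - b ≤ z_high →
      (∀ d, d_low ≤ d → d ≤ d_high → z_low ≤ d - b → d - b ≤ z_high →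
        U d - P (d - b) ≤ U c - P (c - b)) → dstar = c := by
    intro c hc1 hc2 hc3 hc4 hcopt
    by_contra hne
    have heq : U dstar - P (dstar - b) = U c - P (c - b) :=
      le_antisymm (hcopt dstar hm1 hm2 hm3 hm4) (hopt c hc1 hc2 hc3 hc4)
    set m := (dstar + c) / 2 with hmdef
    have hUm : (U dstar + U c) / 2 < U m := by
      have := hU_conc.2 (Set.mem_univ dstar) (Set.mem_univ c) hne
        (by norm_num : (0:ℝ) < 1/2) (by norm_num : (0:ℝ) < 1/2) (by norm_num)
      simp only [smul_eq_mul] at this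
      have hm' : m = 1/2 * dstar + 1/2 * c := by rw [hmdef]; ring
      rw [hm']
      linarith
    have hPmid : P (m - b) ≤ (P (dstar - b) + P (c - b)) / 2 := by
      have ha := hPgep (dstar - b); have hb' := hPgep (c - b)
      have hc' := hPgem (dstar - b); have hd' := hPgem (c - b)
      rw [hP]
      split_ifs with h
      · have : πp * (m - b) = (πp * (dstar - b) + πp * (c - b)) / 2 := by
          rw [hmdef]; ring
        linarith
      · have : πm * (m - b) = (πm * (dstar - b) + πm * (c - b)) / 2 := by
          rw [hmdef]; ring
        linarith
    have hopt' := hopt m (by rw [hmdef]; linarith) (by rw [hmdef]; linarith)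
      (by rw [hmdef]; linarith) (by rw [hmdef]; linarith)
    linarith
  refine ⟨?_, ?_, ?_, ?_, ?_⟩
  -- Regime 1 : b ≤ Δ₁
  · intro hb
    have hcΔ : b + z_high ≤ Δ₂ := by rw [hΔ₁] at hb; linarith
    have hΔ₂h : Δ₂ ≤ d_high := by
      rw [hΔ₂]; exact max_le hd (min_le_right _ _)
    apply huniq (b + z_high) (by linarith) (by linarith) (by linarith) (by linarith)
    intro d hd1 hd2 hd3 hd4
    have key := hmono' πp d (b + z_high) (by linarith) hd1 (by rw [← hΔ₂]; exact hcΔ)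
    have hPc : P (b + z_high - b) = πp * (b + z_high - b) := hPp _ (by linarith)
    have hPd := hPgep (d - b)
    have e1 : πp * (d - b) = πp * d - πp * b := by ring
    have e2 : πp * (b + z_high - b) = πp * (b + z_high) - πp * b := by ring
    rw [hPc]
    linarith
  -- Regime 2 : Δ₁ ≤ b ≤ Δ₂
  · intro hb1 hb2
    have hΔ₂l : d_low ≤ Δ₂ := by rw [hΔ₂]; exact le_max_left _ _
    have hΔ₂h : Δ₂ ≤ d_high := by rw [hΔ₂]; exact max_le hd (min_le_right _ _)
    rw [← hΔ₂]
    apply huniq Δ₂ hΔ₂l hΔ₂h (by linarith) (by rw [hΔ₁] at hb1; linarith)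
    intro d hd1 hd2 hd3 hd4
    have key := hproj πp d hd1 hd2
    rw [← hΔ₂] at key
    have hPc : P (Δ₂ - b) = πp * (Δ₂ - b) := hPp _ (by linarith)
    have hPd := hPgep (d - b)
    have e1 : πp * (d - b) = πp * d - πp * b := by ring
    have e2 : πp * (Δ₂ - b) = πp * Δ₂ - πp * b := by ring
    rw [hPc]
    linarith
  -- Regime 3 : Δ₂ ≤ b ≤ Δ₃
  · intro hb1 hb2
    have hΔ₂l : d_low ≤ Δ₂ := by rw [hΔ₂]; exact le_max_left _ _
    have hbl : d_low ≤ b := le_trans hΔ₂l hb1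
    have hminp : min (f πp) d_high ≤ Δ₂ := by rw [hΔ₂]; exact le_max_right _ _
    rcases le_total b d_high with hbh | hbh
    · -- c = b
      have hc : max d_low (min b d_high) = b := by
        rw [min_eq_left hbh, max_eq_right hbl]
      rw [hc]
      apply huniq b hbl hbh (by linarith) (by linarith)
      intro d hd1 hd2 hd3 hd4
      have hPc : P (b - b) = 0 := by rw [hPp (b - b) (by linarith)]; ring
      rw [hPc]
      rcases le_total d b with hdb | hdb
      · -- use πm side
        have key := hmono' πm d b hdb hd1 (by rw [← hΔ₃]; exact hb2)
        have hPd : P (d - b) = πm * (d - b) := hPm _ (by linarith)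
        have e1 : πm * (d - b) = πm * d - πm * b := by ring
        rw [hPd]
        nlinarith
      · -- use πp side
        have key := hanti' πp b d hdb (le_trans hminp hb1) hd2
        have hPd := hPgep (d - b)
        have e1 : πp * (d - b) = πp * d - πp * b := by ring
        nlinarith
    · -- c = d_high
      have hc : max d_low (min b d_high) = d_high := by
        rw [min_eq_right hbh, max_eq_right hd]
      rw [hc]
      apply huniq d_high hd le_rfl (by linarith) (by linarith)
      intro d hd1 hd2 hd3 hd4
      have key := hmono' πm d d_high hd2 hd1 (by rw [← hΔ₃]; linarith)
      have hPc : P (d_high - b) = πm * (d_high - b) := hPm _ (by linarith)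
      have hPd : P (d - b) = πm * (d - b) := hPm _ (by linarith)
      have e1 : πm * (d - b) = πm * d - πm * b := by ring
      have e2 : πm * (d_high - b) = πm * d_high - πm * b := by ring
      rw [hPc, hPd]
      linarith
  -- Regime 4 : Δ₃ ≤ b ≤ Δ₄
  · intro hb1 hb2
    have hΔ₃l : d_low ≤ Δ₃ := by rw [hΔ₃]; exact le_max_left _ _
    have hΔ₃h : Δ₃ ≤ d_high := by rw [hΔ₃]; exact max_le hd (min_le_right _ _)
    rw [← hΔ₃]
    apply huniq Δ₃ hΔ₃l hΔ₃h (by rw [hΔ₄] at hb2; linarith) (by linarith)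
    intro d hd1 hd2 hd3 hd4
    have key := hproj πm d hd1 hd2
    rw [← hΔ₃] at key
    have hPc : P (Δ₃ - b) = πm * (Δ₃ - b) := hPm _ (by linarith)
    have hPd := hPgem (d - b)
    have e1 : πm * (d - b) = πm * d - πm * b := by ring
    have e2 : πm * (Δ₃ - b) = πm * Δ₃ - πm * b := by ring
    rw [hPc]
    linarith
  -- Regime 5 : Δ₄ ≤ b
  · intro hb
    have hcΔ : Δ₃ ≤ b + z_low := by rw [hΔ₄] at hb; linarith
    have hΔ₃l : d_low ≤ Δ₃ := by rw [hΔ₃]; exact le_max_left _ _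
    have hminm : min (f πm) d_high ≤ Δ₃ := by rw [hΔ₃]; exact le_max_right _ _
    apply huniq (b + z_low) (by linarith) (by linarith) (by linarith) (by linarith)
    intro d hd1 hd2 hd3 hd4
    have key := hanti' πm (b + z_low) d (by linarith) (le_trans hminm hcΔ) hd2
    have hPc : P (b + z_low - b) = πm * (b + z_low - b) := hPm _ (by linarith)
    have hPd := hPgem (d - b)
    have e1 : πm * (d - b) = πm * d - πm * b := by ring
    have e2 : πm * (b + z_low - b) = πm * (b + z_low) - πm * b := by ring
    rw [hPc]
    linarith
end
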